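/- Let K be a nonempty closed convex subset of a uniformly convex real Banach space E with a partial order ≤ induced by a closed convex cone P, and let T : K → K be a monotone α-nonexpansive mapping for some α < 1. Assume x₀ ∈ K satisfies Tx₀ ≤ x₀ ≤ 0 and the orbit O(x₀) = {Tⁿx₀ : n = 0, 1, 2, ...} is bounded in norm. If the norm is monotonic (‖x‖ ≤ ‖y‖ whenever 0 ≤ x ≤ y), then the sequence Tⁿx₀ converges strongly (in norm) to a fixed point z of T with z ≤ x₀. -/

import Mathlib

/-!
The iterates `xₙ = Tⁿx₀` decrease in the cone order and stay below `0`, so by monotonicity of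
the norm `‖xₙ‖` increases to some `r`, and every midpoint of `x_N` and a later `xₙ` has norm at
least `‖x_N‖`. Uniform convexity forces midpoints of far-apart points of the ball of radius `r`
to have norm noticeably below `r`, hence the iterates are Cauchy. Their limit `z` lies below
every `xₙ`, so the α-nonexpansive inequality applies to `(z, xₙ)`; in the limit it reads
`‖Tz - z‖² ≤ α ‖Tz - z‖²`, and `α < 1` gives `Tz = z`.
-/

open Filter Topology

/-- A closed convex cone in a real normed space: nonempty, closed, not `{0}`,
pointed (`P ∩ (−P) = {0}`), and closed under nonnegative linear combinations. -/
def IsClosedConvexCone {E : Type*} [NormedAddCommGroup E] [NormedSpace ℝ E]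
    (P : Set E) : Prop :=
  P.Nonempty ∧ IsClosed P ∧ P ≠ {0} ∧ P ∩ (-P) = {0} ∧
    ∀ x ∈ P, ∀ y ∈ P, ∀ a b : ℝ, 0 ≤ a → 0 ≤ b → a • x + b • y ∈ P

/-- Weak convergence of a sequence: `f (x n) → f l` for every continuous
linear functional `f`. -/
def WeakConv {E : Type*} [NormedAddCommGroup E] [NormedSpace ℝ E]
    (x : ℕ → E) (l : E) : Prop :=
  ∀ f : E →L[ℝ] ℝ, Tendsto (fun n => f (x n)) atTop (𝓝 (f l))

/-- `T` is monotone (w.r.t. the order `x ≤ y ↔ y - x ∈ P`) and α-nonexpansive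
on `K`. -/
def MonotoneAlphaNonexpansive {E : Type*} [NormedAddCommGroup E] [NormedSpace ℝ E]
    (P K : Set E) (T : E → E) (α : ℝ) : Prop :=
  (∀ x ∈ K, ∀ y ∈ K, y - x ∈ P → T y - T x ∈ P) ∧
    ∀ x ∈ K, ∀ y ∈ K, y - x ∈ P →
      ‖T x - T y‖ ^ 2 ≤ α * ‖T x - y‖ ^ 2 + α * ‖T y - x‖ ^ 2
        + (1 - 2 * α) * ‖x - y‖ ^ 2

namespace IsClosedConvexCone

variable {E : Type*} [NormedAddCommGroup E] [NormedSpace ℝ E] {P : Set E}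

theorem isClosed (hP : IsClosedConvexCone P) : IsClosed P := hP.2.1

theorem add_mem (hP : IsClosedConvexCone P) {u v : E} (hu : u ∈ P) (hv : v ∈ P) :
    u + v ∈ P := by
  simpa using hP.2.2.2.2 u hu v hv 1 1 zero_le_one zero_le_one

theorem smul_mem (hP : IsClosedConvexCone P) {c : ℝ} (hc : 0 ≤ c) {u : E} (hu : u ∈ P) :
    c • u ∈ P := by
  simpa using hP.2.2.2.2 u hu u hu c 0 hc le_rfl

theorem zero_mem (hP : IsClosedConvexCone P) : (0 : E) ∈ P := by
  obtain ⟨u, hu⟩ := hP.1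
  simpa using hP.smul_mem le_rfl hu

theorem iterate_sub_iterate_mem (hP : IsClosedConvexCone P) {K : Set E} {T : E → E}
    (hTK : Set.MapsTo T K K) (hmono : ∀ x ∈ K, ∀ y ∈ K, y - x ∈ P → T y - T x ∈ P)
    {x₀ : E} (hx₀ : x₀ ∈ K) (hdec : x₀ - T x₀ ∈ P) {n m : ℕ} (hnm : n ≤ m) :
    T^[n] x₀ - T^[m] x₀ ∈ P := by
  have hstep : ∀ k, T^[k] x₀ - T^[k + 1] x₀ ∈ P := by
    intro k
    induction k with
    | zero => simpa using hdec
    | succ k ih =>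
      simpa only [Function.iterate_succ_apply'] using
        hmono _ (hTK.iterate (k + 1) hx₀) _ (hTK.iterate k hx₀) ih
  induction m, hnm using Nat.le_induction with
  | base => simpa using hP.zero_mem
  | succ m _ ih => simpa using hP.add_mem ih (hstep m)

theorem norm_le_norm_midpoint (hP : IsClosedConvexCone P)
    (hnorm : ∀ x y : E, x ∈ P → y - x ∈ P → ‖x‖ ≤ ‖y‖) {x y : E} (hy : -y ∈ P)
    (hxy : y - x ∈ P) : ‖y‖ ≤ ‖midpoint ℝ y x‖ := by
  have hmid : -midpoint ℝ y x - -y = (2⁻¹ : ℝ) • (y - x) := by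
    rw [midpoint_eq_smul_add, invOf_eq_inv]
    module
  have hP' := hP.smul_mem (by norm_num : (0 : ℝ) ≤ 2⁻¹) hxy
  rw [← hmid] at hP'
  simpa using hnorm _ _ hy hP'

end IsClosedConvexCone

theorem cauchySeq_of_norm_le_norm_midpoint {E : Type*} [NormedAddCommGroup E]
    [NormedSpace ℝ E] [UniformConvexSpace E] {x : ℕ → E} (hbdd : ∃ M, ∀ n, ‖x n‖ ≤ M)
    (hmid : ∀ N n, N ≤ n → ‖x N‖ ≤ ‖midpoint ℝ (x N) (x n)‖) : CauchySeq x := by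
  have hnorm_midpoint : ∀ N n, ‖midpoint ℝ (x N) (x n)‖ = ‖x N + x n‖ / 2 := by
    intro N n
    rw [midpoint_eq_smul_add, invOf_eq_inv, norm_smul, norm_inv, Real.norm_two]
    ring
  have hmono : Monotone fun n => ‖x n‖ := by
    refine monotone_nat_of_le_succ fun n => ?_
    have hle_half := (hmid n (n + 1) n.le_succ).trans_eq (hnorm_midpoint n (n + 1))
    linarith [norm_add_le (x n) (x (n + 1))]
  obtain ⟨M, hM⟩ := hbdd
  have hbddAbove : BddAbove (Set.range fun n => ‖x n‖) := ⟨M, by rintro _ ⟨n, rfl⟩; exact hM n⟩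
  set r := ⨆ n, ‖x n‖
  have hle : ∀ n, ‖x n‖ ≤ r := le_ciSup hbddAbove
  have hlim : Tendsto (fun n => ‖x n‖) atTop (𝓝 r) := tendsto_atTop_ciSup hmono hbddAbove
  rw [Metric.cauchySeq_iff']
  intro ε hε
  obtain ⟨δ, hδ, huc⟩ := exists_forall_closed_ball_dist_add_le_two_mul_sub E hε r
  obtain ⟨N, hN⟩ := (hlim.eventually (eventually_gt_nhds (by linarith : r - δ / 2 < r))).exists
  refine ⟨N, fun n hn => lt_of_not_ge fun hfar => ?_⟩
  rw [dist_comm, dist_eq_norm] at hfar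
  have hsum_le := huc (hle N) (hle n) hfar
  have hle_half := (hmid N n hn).trans_eq (hnorm_midpoint N n)
  linarith

theorem MonotoneAlphaNonexpansive.isFixedPt_of_tendsto {E : Type*} [NormedAddCommGroup E]
    [NormedSpace ℝ E] {P K : Set E} {T : E → E} {α : ℝ} (hT : MonotoneAlphaNonexpansive P K T α)
    (hα : α < 1) {x : ℕ → E} {z : E} (hz : z ∈ K) (hxK : ∀ n, x n ∈ K)
    (hxz : ∀ n, x n - z ∈ P) (hx : Tendsto x atTop (𝓝 z))
    (hTx : Tendsto (fun n => T (x n)) atTop (𝓝 z)) : Function.IsFixedPt T z := by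
  have hlhs : Tendsto (fun n => ‖T z - T (x n)‖ ^ 2) atTop (𝓝 (‖T z - z‖ ^ 2)) :=
    (tendsto_const_nhds.sub hTx).norm.pow 2
  have hrhs : Tendsto (fun n => α * ‖T z - x n‖ ^ 2 + α * ‖T (x n) - z‖ ^ 2
      + (1 - 2 * α) * ‖z - x n‖ ^ 2) atTop
      (𝓝 (α * ‖T z - z‖ ^ 2 + α * ‖z - z‖ ^ 2 + (1 - 2 * α) * ‖z - z‖ ^ 2)) :=
    ((((tendsto_const_nhds.sub hx).norm.pow 2).const_mul α).add
      (((hTx.sub_const z).norm.pow 2).const_mul α)).add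
      (((tendsto_const_nhds.sub hx).norm.pow 2).const_mul _)
  have hlim := le_of_tendsto_of_tendsto' hlhs hrhs fun n => hT.2 z hz (x n) (hxK n) (hxz n)
  simp only [sub_self, norm_zero] at hlim
  have hsq : ‖T z - z‖ ^ 2 = 0 := le_antisymm (by nlinarith) (sq_nonneg _)
  simpa [Function.IsFixedPt, sub_eq_zero] using hsq

theorem picard_strong_convergence_decreasing_general
    {E : Type*} [NormedAddCommGroup E] [NormedSpace ℝ E]
    [UniformConvexSpace E] [CompleteSpace E]
    (P : Set E) (hP : IsClosedConvexCone P)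
    (K : Set E) (hKcl : IsClosed K)
    (T : E → E) (hTK : ∀ x ∈ K, T x ∈ K)
    (α : ℝ) (hα : α < 1)
    (hT : MonotoneAlphaNonexpansive P K T α)
    (x₀ : E) (hx₀ : x₀ ∈ K) (hneg : -x₀ ∈ P) (hdec : x₀ - T x₀ ∈ P)
    (hbdd : ∃ M : ℝ, ∀ n : ℕ, ‖T^[n] x₀‖ ≤ M)
    (hnorm : ∀ x y : E, x ∈ P → y - x ∈ P → ‖x‖ ≤ ‖y‖) :
    ∃ z ∈ K, T z = z ∧ x₀ - z ∈ P ∧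
      Tendsto (fun n => T^[n] x₀) atTop (𝓝 z) := by
  set x : ℕ → E := fun n => T^[n] x₀
  have hxK : ∀ n, x n ∈ K := fun n => Set.MapsTo.iterate hTK n hx₀
  have hchain : ∀ {n m}, n ≤ m → x n - x m ∈ P := hP.iterate_sub_iterate_mem hTK hT.1 hx₀ hdec
  have hxneg : ∀ n, -x n ∈ P := fun n => by
    simpa [x, neg_add_eq_sub, sub_sub_cancel_left] using hP.add_mem hneg (hchain n.zero_le)
  obtain ⟨z, hz⟩ := cauchySeq_tendsto_of_complete <| cauchySeq_of_norm_le_norm_midpoint hbdd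
    fun N n hn => hP.norm_le_norm_midpoint hnorm (hxneg N) (hchain hn)
  have hxz : ∀ n, x n - z ∈ P := fun n => hP.isClosed.mem_of_tendsto
    (tendsto_const_nhds.sub hz) ((eventually_ge_atTop n).mono fun m => hchain)
  have hzK : z ∈ K := hKcl.mem_of_tendsto hz (Eventually.of_forall hxK)
  have hTx : Tendsto (fun n => T (x n)) atTop (𝓝 z) := by
    simpa only [x, Function.iterate_succ_apply'] using (tendsto_add_atTop_iff_nat 1).mpr hz
  exact ⟨z, hzK, hT.isFixedPt_of_tendsto hα hzK hxK hxz hz hTx, hxz 0, hz⟩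

/-- If `T x₀ ≤ x₀ ≤ 0`, the orbit of `x₀` is norm-bounded and the norm is
monotonic, then the Picard iterates converge strongly to a fixed point
`z ≤ x₀`. -/
theorem picard_strong_convergence_decreasing
    {E : Type*} [NormedAddCommGroup E] [NormedSpace ℝ E]
    [UniformConvexSpace E] [CompleteSpace E]
    (P : Set E) (hP : IsClosedConvexCone P)
    (K : Set E) (hKne : K.Nonempty) (hKcl : IsClosed K) (hKco : Convex ℝ K)
    (T : E → E) (hTK : ∀ x ∈ K, T x ∈ K)
    (α : ℝ) (hα : α < 1)
    (hT : MonotoneAlphaNonexpansive P K T α)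
    (x₀ : E) (hx₀ : x₀ ∈ K) (hneg : -x₀ ∈ P) (hdec : x₀ - T x₀ ∈ P)
    (hbdd : ∃ M : ℝ, ∀ n : ℕ, ‖T^[n] x₀‖ ≤ M)
    (hnorm : ∀ x y : E, x ∈ P → y - x ∈ P → ‖x‖ ≤ ‖y‖) :
    ∃ z ∈ K, T z = z ∧ x₀ - z ∈ P ∧
      Tendsto (fun n => T^[n] x₀) atTop (𝓝 z) :=
  picard_strong_convergence_decreasing_general P hP K hKcl T hTK α hα hT x₀ hx₀ hneg hdec hbdd hnorm
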